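/- arXiv:2209.02667 — 2 statements merged into one kernel-verified Lean document; each statement's English description precedes it below -/
import Mathlib

section
/- For every cotransverse map f : [n] → [n] and every x ∈ [0,1]^n, there exists a permutation τ of {1,…,n} (depending on x) such that T(f)(x)_i = x_{τ(i)} for all 1 ≤ i ≤ n; in other words, T(f)(x) is a rearrangement of the coordinates of x. -/
open scoped ENNReal

instance : Fact ((0:ℝ) ≤ 1) := ⟨zero_le_one⟩

/- The directed metric `d⃗₁` on the vertices `{0,1}^n`. -/
open Classical in
noncomputable def vd {n : ℕ} (x y : Fin n → Bool) : ℝ≥0∞ :=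
  if x ≤ y then ∑ i, (if x i = y i then 0 else 1) else ⊤

def Cotransverse {m n : ℕ} (f : (Fin m → Bool) → (Fin n → Bool)) : Prop :=
  StrictMono f ∧ ∀ x y, vd x y = 1 → vd (f x) (f y) = 1

/-- The topologized map `T(f) : [0,1]^m → [0,1]^n` associated with a map
`f : {0,1}^m → {0,1}^n`, defined coordinatewise by the max-min (sup-inf)
formula, the sup and inf being taken in the complete lattice `[0,1]`
(so `sup ∅ = 0` and `inf ∅ = 1`). -/
noncomputable def Tmap {m n : ℕ} (f : (Fin m → Bool) → (Fin n → Bool))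
    (x : Fin m → unitInterval) : Fin n → unitInterval :=
  fun i => ⨆ (ε : Fin m → Bool) (_ : f ε i = true), ⨅ (k : Fin m) (_ : ε k = true), x k


/-! A cotransverse self-map `f` of the cube `{0,1}^n` is monotone and raises the weight (number
of ones) by exactly one along every edge, so `weight (f ε) = weight ε + weight (f ⊥)`; at the top
vertex this forces `weight (f ⊥) = 0`, i.e. `f` preserves weight. For `t > 0`, the coordinates
where `T(f)(x) ≥ t` are exactly the ones of `f` applied to the superlevel vertex `{k | t ≤ x k}`.
Hence `T(f)(x)` and `x` have superlevel sets of equal size at every level, and two tuples with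
this property coincide once sorted. -/

open Finset OrderDual

section Rearrangement

variable {n : ℕ} {α : Type*}

theorem eq_of_monotone_of_card_filter_le_eq [PartialOrder α] [DecidableLE α] {c d : Fin n → α}
    (hc : Monotone c) (hd : Monotone d) (h : ∀ t, #{i | c i ≤ t} = #{i | d i ≤ t}) :
    c = d := by
  have hc' := fun j t => Tuple.lt_card_le_iff_apply_le_of_monotone (j := j) (a := t) hc
  have hd' := fun j t => Tuple.lt_card_le_iff_apply_le_of_monotone (j := j) (a := t) hd
  funext j
  apply le_antisymm
  · rw [← hc', h, hd']
  · rw [← hd', ← h, hc']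

theorem card_filter_comp_perm (p : Fin n → Prop) [DecidablePred p] (σ : Equiv.Perm (Fin n)) :
    #{i | p (σ i)} = #{i | p i} :=
  card_equiv σ (by simp)

theorem exists_perm_eq_comp_of_card_filter_ge_eq [LinearOrder α] {a b : Fin n → α}
    (h : ∀ t, #{i | t ≤ a i} = #{i | t ≤ b i}) :
    ∃ σ : Equiv.Perm (Fin n), ∀ i, a i = b (σ i) := by
  set a' : Fin n → αᵒᵈ := toDual ∘ a
  set b' : Fin n → αᵒᵈ := toDual ∘ b
  have hsorted : a' ∘ Tuple.sort a' = b' ∘ Tuple.sort b' :=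
    eq_of_monotone_of_card_filter_le_eq (Tuple.monotone_sort a') (Tuple.monotone_sort b')
      fun t => (card_filter_comp_perm (a' · ≤ t) _).trans <|
        (h (ofDual t)).trans (card_filter_comp_perm (b' · ≤ t) _).symm
  refine ⟨(Tuple.sort a').symm.trans (Tuple.sort b'), fun i => ?_⟩
  simpa [a', b'] using congrFun hsorted ((Tuple.sort a').symm i)

end Rearrangement

theorem exists_le_of_le_iSup₂ {ι α : Type*} [Finite ι] [Nonempty ι] [CompleteLinearOrder α]
    {p : ι → Prop} {g : ι → α} {t : α} (ht : t ≠ ⊥) (h : t ≤ ⨆ (i) (_ : p i), g i) :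
    ∃ i, p i ∧ t ≤ g i := by
  obtain ⟨i, hi⟩ := Finite.exists_max fun i => ⨆ (_ : p i), g i
  replace h := h.trans (iSup_le hi)
  by_cases hp : p i
  · exact ⟨i, hp, by rwa [iSup_pos hp] at h⟩
  · rw [iSup_neg hp, le_bot_iff] at h
    exact absurd h ht

section Cube

variable {m n : ℕ}

def weight (ε : Fin n → Bool) : ℕ := #{i | ε i = true}

theorem weight_le (ε : Fin n → Bool) : weight ε ≤ n :=
  (card_filter_le _ _).trans_eq (card_fin n)

theorem weight_top : weight (⊤ : Fin n → Bool) = n := by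
  simp [weight]

theorem weight_eq_zero_iff {ε : Fin n → Bool} : weight ε = 0 ↔ ε = ⊥ := by
  simp [weight, funext_iff]

theorem weight_add_card_ne_of_le {x y : Fin n → Bool} (hxy : x ≤ y) :
    weight x + #{i | x i ≠ y i} = weight y := by
  rw [weight, weight, ← card_union_of_disjoint (disjoint_filter.2 fun i _ hx hne => ?_)]
  · congr 1
    ext i
    have := hxy i
    simp only [mem_union, mem_filter, mem_univ, true_and]
    revert this
    cases x i <;> cases y i <;> simp
  · have := hxy i
    rw [hx] at this hne
    exact hne (eq_top_iff.2 this).symm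

theorem vd_eq_one_iff {x y : Fin n → Bool} : vd x y = 1 ↔ x ≤ y ∧ weight y = weight x + 1 := by
  unfold vd
  split_ifs with hxy
  · rw [← weight_add_card_ne_of_le hxy]
    simp [sum_ite, hxy]
  · simp [hxy]

theorem weight_update_false_add_one {ε : Fin n → Bool} {i : Fin n} (hi : ε i = true) :
    weight (Function.update ε i false) + 1 = weight ε := by
  have : ({j | Function.update ε i false j = true} : Finset (Fin n)) =
      ({j | ε j = true} : Finset (Fin n)).erase i := by
    ext j
    by_cases hj : j = i <;> simp [hj, Function.update_apply]
  rw [weight, weight, this, card_erase_add_one (by simpa using hi)]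

theorem vd_update_false_eq_one {ε : Fin n → Bool} {i : Fin n} (hi : ε i = true) :
    vd (Function.update ε i false) ε = 1 :=
  vd_eq_one_iff.2 ⟨update_le_iff.2 ⟨Bool.false_le _, fun _ _ => le_rfl⟩,
    (weight_update_false_add_one hi).symm⟩

theorem weight_apply_eq_add_weight_apply_bot {f : (Fin m → Bool) → (Fin n → Bool)}
    (hf : ∀ x y, vd x y = 1 → vd (f x) (f y) = 1) (ε : Fin m → Bool) :
    weight (f ε) = weight ε + weight (f ⊥) := by
  induction hε : weight ε generalizing ε with
  | zero => rw [weight_eq_zero_iff.1 hε, zero_add]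
  | succ k ih =>
    obtain ⟨i, hi⟩ := card_pos.1 (hε ▸ k.succ_pos : 0 < weight ε)
    replace hi : ε i = true := (mem_filter.1 hi).2
    have hstep := (vd_eq_one_iff.1 (hf _ _ (vd_update_false_eq_one hi))).2
    have := weight_update_false_add_one hi
    rw [hstep, ih _ (by omega)]
    omega

theorem Cotransverse.weight_apply {f : (Fin n → Bool) → (Fin n → Bool)} (hf : Cotransverse f)
    (ε : Fin n → Bool) : weight (f ε) = weight ε := by
  have hbot : weight (f ⊥) = 0 := by
    have htop := weight_apply_eq_add_weight_apply_bot hf.2 ⊤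
    rw [weight_top] at htop
    have := weight_le (f ⊤)
    omega
  rw [weight_apply_eq_add_weight_apply_bot hf.2, hbot, add_zero]

end Cube

def superlevel {ι α : Type*} [LE α] [DecidableLE α] (x : ι → α) (t : α) : ι → Bool :=
  fun k => decide (t ≤ x k)

theorem le_Tmap_iff {m n : ℕ} {f : (Fin m → Bool) → (Fin n → Bool)} (hf : Monotone f)
    {x : Fin m → unitInterval} {t : unitInterval} (ht : t ≠ 0) (i : Fin n) :
    t ≤ Tmap f x i ↔ f (superlevel x t) i = true := by
  constructor
  · intro h
    obtain ⟨ε, hε, hle⟩ := exists_le_of_le_iSup₂ ht h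
    have hsub : ε ≤ superlevel x t := fun k => Bool.le_iff_imp.2 fun hk =>
      decide_eq_true (hle.trans (iInf₂_le k hk))
    simpa [hε, Bool.le_iff_imp] using hf hsub i
  · intro h
    exact le_iSup₂_of_le (superlevel x t) h (le_iInf₂ fun k hk => of_decide_eq_true hk)

theorem Cotransverse.card_filter_le_Tmap {n : ℕ} {f : (Fin n → Bool) → (Fin n → Bool)}
    (hf : Cotransverse f) (x : Fin n → unitInterval) (t : unitInterval) :
    #{i | t ≤ Tmap f x i} = #{k | t ≤ x k} := by
  rcases eq_or_ne t 0 with rfl | ht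
  · simp only [unitInterval.nonneg', filter_true]
  · calc #{i | t ≤ Tmap f x i} = weight (f (superlevel x t)) := by
          simp only [weight, le_Tmap_iff hf.1.monotone ht]
      _ = weight (superlevel x t) := hf.weight_apply _
      _ = #{k | t ≤ x k} := by simp [weight, superlevel]

/-- For a cotransverse map `f : [n] → [n]` and every `x ∈ [0,1]^n`, the point
`T(f)(x)` is a rearrangement of the coordinates of `x`. -/
theorem stmt6 (n : ℕ) (f : (Fin n → Bool) → (Fin n → Bool))
    (hf : Cotransverse f) :
    ∀ x : Fin n → unitInterval, ∃ τ : Equiv.Perm (Fin n),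
      ∀ i : Fin n, Tmap f x i = x (τ i) :=
  fun x => exists_perm_eq_comp_of_card_filter_ge_eq (hf.card_filter_le_Tmap x)
end

section
/- Let ι : □ → \widehat{□} be the inclusion of the category of cocubical maps into the category of cotransverse maps, and let \widehat{L} : Psh(□) → Psh(\widehat{□}) be the left adjoint to the restriction functor along ι (the left Kan extension along ι^{op}). Then for all n ≥ 0 there are isomorphisms of presheaves \widehat{L}(□(−,n)) ≅ \widehat{□}(−,n) and \widehat{L}(∂□[n]) ≅ ∂\widehat{□}[n]. -/
open CategoryTheory

open scoped ENNReal

/-- A map `φ : [m] → [n]` is cocubical (a composite of coface maps). -/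
def Cocubical {m n : ℕ} (φ : (Fin m → Bool) → (Fin n → Bool)) : Prop :=
  ∃ (ι : Fin m → Fin n) (b : Fin n → Bool), StrictMono ι ∧
    (∀ x i, φ x (ι i) = x i) ∧
    (∀ x j, j ∉ Set.range ι → φ x j = b j)

lemma cotransverse_id {n : ℕ} :
    Cotransverse (id : (Fin n → Bool) → (Fin n → Bool)) :=
  ⟨strictMono_id, fun _ _ h => h⟩

lemma cotransverse_comp {m n p : ℕ} {f : (Fin m → Bool) → (Fin n → Bool)}
    {g : (Fin n → Bool) → (Fin p → Bool)} (hf : Cotransverse f)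
    (hg : Cotransverse g) : Cotransverse (g ∘ f) :=
  ⟨hg.1.comp hf.1, fun x y h => hg.2 _ _ (hf.2 x y h)⟩

lemma Cotransverse.dim_le {m n : ℕ} {f : (Fin m → Bool) → (Fin n → Bool)}
    (hf : Cotransverse f) : m ≤ n := by
  classical
  set N : (Fin n → Bool) → ℕ := fun u => ∑ i, (if u i then 1 else 0) with hN
  have hNlt : ∀ u v : Fin n → Bool, u < v → N u < N v := by
    intro u v huv
    rw [Pi.lt_def] at huv
    obtain ⟨hle, i, hi⟩ := huv
    refine Finset.sum_lt_sum (fun j _ => ?_) ⟨i, Finset.mem_univ i, ?_⟩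
    · have := hle j
      revert this
      cases u j <;> cases v j <;> simp
    · revert hi
      cases u i <;> cases v i <;> simp
  have hNle : ∀ u : Fin n → Bool, N u ≤ n := by
    intro u
    calc N u ≤ ∑ _i : Fin n, 1 := Finset.sum_le_sum (fun j _ => by split <;> simp)
    _ = n := by simp
  have hchain : StrictMono (fun j : Fin (m + 1) =>
      (⟨N (f (fun i => decide ((i : ℕ) < (j : ℕ)))),
        Nat.lt_succ_of_le (hNle _)⟩ : Fin (n + 1))) := by
    intro j j' hjj
    simp only [Fin.mk_lt_mk]
    apply hNlt
    apply hf.1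
    rw [Pi.lt_def]
    constructor
    · intro i
      have : (i : ℕ) < (j : ℕ) → (i : ℕ) < (j' : ℕ) := fun h => h.trans hjj
      revert this
      by_cases h1 : (i : ℕ) < (j : ℕ) <;> by_cases h2 : (i : ℕ) < (j' : ℕ) <;>
        simp [h1, h2]
    · refine ⟨⟨(j : ℕ), lt_of_lt_of_le hjj (Nat.lt_succ_iff.mp j'.2)⟩, ?_⟩
      simp [hjj]
  simpa using Nat.succ_le_succ_iff.mp (by
    simpa using Fintype.card_le_of_injective _ hchain.injective)

lemma cocubical_id {n : ℕ} :
    Cocubical (id : (Fin n → Bool) → (Fin n → Bool)) :=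
  ⟨id, fun _ => false, strictMono_id, fun _ _ => rfl,
    fun _ j hj => absurd ⟨j, rfl⟩ hj⟩

lemma cocubical_comp {m n p : ℕ} {f : (Fin m → Bool) → (Fin n → Bool)}
    {g : (Fin n → Bool) → (Fin p → Bool)} (hf : Cocubical f)
    (hg : Cocubical g) : Cocubical (g ∘ f) := by
  classical
  obtain ⟨ι₁, b₁, hι₁, h₁, h₁'⟩ := hf
  obtain ⟨ι₂, b₂, hι₂, h₂, h₂'⟩ := hg
  refine ⟨ι₂ ∘ ι₁, fun j => if h : ∃ i, ι₂ i = j then b₁ h.choose else b₂ j,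
    hι₂.comp hι₁, ?_, ?_⟩
  · intro x i
    simp only [Function.comp_apply, h₂, h₁]
  · intro x j hj
    by_cases h : ∃ i, ι₂ i = j
    · obtain ⟨i, hi⟩ := h
      have hib : i ∉ Set.range ι₁ := by
        rintro ⟨i', rfl⟩
        exact hj ⟨i', by simpa using hi⟩
      have hval : (g ∘ f) x j = b₁ i := by
        subst hi
        rw [Function.comp_apply, h₂]
        exact h₁' x i hib
      rw [hval]
      show b₁ i = if h : ∃ i, ι₂ i = j then b₁ h.choose else b₂ j
      rw [dif_pos (⟨i, hi⟩ : ∃ i, ι₂ i = j)]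
      congr 1
      exact (hι₂.injective
        ((Exists.choose_spec (⟨i, hi⟩ : ∃ i, ι₂ i = j)).trans hi.symm)).symm
    · show (g ∘ f) x j = if h : ∃ i, ι₂ i = j then b₁ h.choose else b₂ j
      rw [dif_neg h]
      exact h₂' (f x) j (by rintro ⟨i, hi⟩; exact h ⟨i, hi⟩)

/-- Every cocubical map is cotransverse. -/
lemma Cocubical.cotransverse {m n : ℕ} {φ : (Fin m → Bool) → (Fin n → Bool)}
    (hφ : Cocubical φ) : Cotransverse φ := by
  classical
  obtain ⟨ι, b, hι, h₁, h₂⟩ := hφ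
  have hmono : Monotone φ := by
    intro x y hxy j
    by_cases hj : j ∈ Set.range ι
    · obtain ⟨i, rfl⟩ := hj
      rw [h₁, h₁]; exact hxy i
    · rw [h₂ x j hj, h₂ y j hj]
  have hsum : ∀ x y : Fin m → Bool,
      (∑ j, (if φ x j = φ y j then (0:ℝ≥0∞) else 1))
        = ∑ i, (if x i = y i then (0:ℝ≥0∞) else 1) := by
    intro x y
    rw [← Finset.sum_subset (Finset.subset_univ (Finset.univ.image ι))
      (fun j _ hj => by
        rw [if_pos]
        rw [h₂ x j (by simpa using hj), h₂ y j (by simpa using hj)])]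
    rw [Finset.sum_image (fun i _ j _ h => hι.injective h)]
    refine Finset.sum_congr rfl fun i _ => ?_
    rw [h₁, h₁]
  constructor
  · intro x y hxy
    rw [Pi.lt_def] at hxy ⊢
    obtain ⟨hle, i, hi⟩ := hxy
    exact ⟨hmono hle, ι i, by rw [h₁, h₁]; exact hi⟩
  · intro x y hxy
    simp only [vd] at hxy ⊢
    by_cases hle : x ≤ y
    · rw [if_pos hle] at hxy
      rw [if_pos (hmono hle), hsum x y]
      exact hxy
    · rw [if_neg hle] at hxy
      exact absurd hxy (by simp)

lemma Cocubical.dim_le {m n : ℕ} {f : (Fin m → Bool) → (Fin n → Bool)}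
    (hf : Cocubical f) : m ≤ n := by
  obtain ⟨ι, b, hι, -, -⟩ := hf
  simpa using Fintype.card_le_of_injective ι hι.injective

/-- The objects of the box category `□`: natural numbers `n`, standing for
the poset `[n] = {0,1}ⁿ`. -/
structure CubeObj where
  dim : ℕ

/-- The objects of the extended category `□̂`. -/
structure TransObj where
  dim : ℕ

/-- The category `□` generated by the cocubical maps. -/
instance : Category CubeObj where
  Hom a b := {f : (Fin a.dim → Bool) → (Fin b.dim → Bool) // Cocubical f}
  id a := ⟨id, cocubical_id⟩
  comp f g := ⟨g.1 ∘ f.1, cocubical_comp f.2 g.2⟩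
  id_comp f := Subtype.ext rfl
  comp_id f := Subtype.ext rfl
  assoc f g h := Subtype.ext rfl

/-- The category `□̂` generated by the cotransverse maps. -/
instance : Category TransObj where
  Hom a b := {f : (Fin a.dim → Bool) → (Fin b.dim → Bool) // Cotransverse f}
  id a := ⟨id, cotransverse_id⟩
  comp f g := ⟨g.1 ∘ f.1, cotransverse_comp f.2 g.2⟩
  id_comp f := Subtype.ext rfl
  comp_id f := Subtype.ext rfl
  assoc f g h := Subtype.ext rfl

/-- The inclusion functor `ι : □ → □̂`. -/
def cubeInclusion : CubeObj ⥤ TransObj where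
  obj a := ⟨a.dim⟩
  map f := ⟨f.1, f.2.cotransverse⟩
  map_id a := Subtype.ext rfl
  map_comp f g := Subtype.ext rfl

/-- The boundary `∂□[n]` of the representable precubical set `□[n]`:
`(∂□[n])_p = □(p, n)` for `p < n` and `∅` for `p ≥ n`. -/
def boundaryCube (n : ℕ) : CubeObjᵒᵖ ⥤ Type where
  obj p := {f : (Fin p.unop.dim → Bool) → (Fin n → Bool) //
    Cocubical f ∧ p.unop.dim < n}
  map {p q} g := TypeCat.ofHom fun f => ⟨f.1 ∘ g.unop.1, cocubical_comp g.unop.2 f.2.1,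
    lt_of_le_of_lt g.unop.2.dim_le f.2.2⟩
  map_id p := by ext f; rfl
  map_comp g h := by ext f; rfl

/-- The boundary `∂□̂[n]` of the representable symmetric transverse set `□̂[n]`:
`(∂□̂[n])_p = □̂(p, n)` for `p < n` and `∅` for `p ≥ n`. -/
def boundaryTrans (n : ℕ) : TransObjᵒᵖ ⥤ Type where
  obj p := {f : (Fin p.unop.dim → Bool) → (Fin n → Bool) //
    Cotransverse f ∧ p.unop.dim < n}
  map {p q} g := TypeCat.ofHom fun f => ⟨f.1 ∘ g.unop.1, cotransverse_comp g.unop.2 f.2.1,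
    lt_of_le_of_lt g.unop.2.dim_le f.2.2⟩
  map_id p := by ext f; rfl
  map_comp g h := by ext f; rfl

/-!
Every cotransverse map `f : [q] → [n]` factors as `f = h ∘ g` with `h` cocubical and
`g : [q] → [q]` cotransverse: `f` maps a maximal chain of `[q]` to a chain of length `q`, so it
varies along exactly `q` coordinates, and `h` is the coface map that keeps these coordinates and
the constant values of `f` elsewhere. This factorization maps, by a cocubical map, to every other
factorization of `f` through a cocubical map. Hence in the colimit formula for the left Kan
extension each element of `□̂[n]` (resp. `∂□̂[n]`) has a representative to which all others
are connected, so `□[n] ⟶ ι^* □̂[n]` and `∂□[n] ⟶ ι^* ∂□̂[n]` are universal arrows.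
-/

open Finset Function Opposite

section Combinatorics

variable {m n p q : ℕ}

lemma vd_of_le {x y : Fin n → Bool} (h : x ≤ y) : vd x y = #{i | x i ≠ y i} := by
  classical
  simp only [vd, if_pos h]
  rw [Finset.sum_ite, Finset.sum_const_zero, Finset.sum_const, nsmul_one, zero_add]

lemma vd_self (x : Fin n → Bool) : vd x x = 0 := by
  simp [vd_of_le le_rfl]

lemma vd_add_vd {x y z : Fin n → Bool} (hxy : x ≤ y) (hyz : y ≤ z) :
    vd x y + vd y z = vd x z := by
  classical
  simp only [vd, if_pos hxy, if_pos hyz, if_pos (hxy.trans hyz), ← Finset.sum_add_distrib]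
  refine Finset.sum_congr rfl fun i _ => ?_
  have hx := hxy i
  have hy := hyz i
  revert hx hy
  cases x i <;> cases y i <;> cases z i <;> simp

lemma Cotransverse.vd_bot_top {f : (Fin q → Bool) → (Fin n → Bool)} (hf : Cotransverse f) :
    vd (f ⊥) (f ⊤) = q := by
  let c : ℕ → Fin q → Bool := fun k i => decide (i.val < k)
  have hc_mono : Monotone c := fun k l hkl i => by
    simp only [c, Bool.le_iff_imp, decide_eq_true_eq]; omega
  have hc_step : ∀ k < q, vd (c k) (c (k + 1)) = 1 := fun k hk => by
    rw [vd_of_le (hc_mono k.le_succ), Nat.cast_eq_one, card_eq_one]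
    exact ⟨⟨k, hk⟩, by ext i; simp [c, Fin.ext_iff]; omega⟩
  have hchain : ∀ k ≤ q, vd (f ⊥) (f (c k)) = k := by
    intro k
    induction k with
    | zero =>
      intro _
      rw [show c 0 = ⊥ from rfl, vd_self, Nat.cast_zero]
    | succ k ih =>
      intro hk
      rw [← vd_add_vd (hf.1.monotone bot_le) (hf.1.monotone (hc_mono k.le_succ)),
        ih (by omega), hf.2 _ _ (hc_step k hk), Nat.cast_succ]
  simpa [show c q = ⊤ from funext fun i => by simp [c]] using hchain q le_rfl

/-- For monotone `f`, the coordinates along which `f` is not constant. -/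
def varyingCoords (f : (Fin q → Bool) → (Fin n → Bool)) : Finset (Fin n) :=
  {j | f ⊥ j ≠ f ⊤ j}

lemma Cotransverse.card_varyingCoords {f : (Fin q → Bool) → (Fin n → Bool)}
    (hf : Cotransverse f) : #(varyingCoords f) = q := by
  have h := hf.vd_bot_top
  rwa [vd_of_le (hf.1.monotone bot_le), Nat.cast_inj] at h

lemma Cotransverse.apply_of_notMem_varyingCoords {f : (Fin q → Bool) → (Fin n → Bool)}
    (hf : Cotransverse f) {j : Fin n} (hj : j ∉ varyingCoords f) (x : Fin q → Bool) :
    f x j = f ⊥ j := by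
  simp only [varyingCoords, mem_filter, mem_univ, true_and, not_not] at hj
  exact le_antisymm (hj ▸ hf.1.monotone le_top j) (hf.1.monotone bot_le j)

lemma Cocubical.le_iff {φ : (Fin m → Bool) → (Fin n → Bool)} (hφ : Cocubical φ)
    {x y : Fin m → Bool} : φ x ≤ φ y ↔ x ≤ y := by
  obtain ⟨ι, b, -, hι, hb⟩ := hφ
  refine ⟨fun h i => hι x i ▸ hι y i ▸ h (ι i), fun h j => ?_⟩
  by_cases hj : j ∈ Set.range ι
  · obtain ⟨i, rfl⟩ := hj
    rw [hι, hι]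
    exact h i
  · rw [hb x j hj, hb y j hj]

lemma Cocubical.vd_eq {φ : (Fin m → Bool) → (Fin n → Bool)} (hφ : Cocubical φ)
    (x y : Fin m → Bool) : vd (φ x) (φ y) = vd x y := by
  classical
  unfold vd
  rw [hφ.le_iff]
  split_ifs
  · obtain ⟨ι, b, hmono, hι, hb⟩ := hφ
    refine (Fintype.sum_of_injective ι hmono.injective _ _ (fun j hj => ?_) fun i => ?_).symm
    · rw [hb x j hj, hb y j hj, if_pos rfl]
    · rw [hι, hι]
  · rfl

lemma Cotransverse.of_cocubical_comp {φ : (Fin n → Bool) → (Fin p → Bool)}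
    {g : (Fin m → Bool) → (Fin n → Bool)} (hφ : Cocubical φ) (h : Cotransverse (φ ∘ g)) :
    Cotransverse g := by
  refine ⟨fun x y hxy => ?_, fun x y hxy => ?_⟩
  · have := h.1 hxy
    simp only [comp_apply, lt_iff_le_not_ge, hφ.le_iff] at this
    exact lt_iff_le_not_ge.2 this
  · rw [← hφ.vd_eq]
    exact h.2 x y hxy

lemma Cocubical.of_comp {φ : (Fin n → Bool) → (Fin p → Bool)}
    {k : (Fin m → Bool) → (Fin n → Bool)} (hφ : Cocubical φ) (h : Cocubical (φ ∘ k)) :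
    Cocubical k := by
  obtain ⟨ι, b, hιmono, hι, hb⟩ := hφ
  obtain ⟨κ, c, hκmono, hκ, hc⟩ := h
  have hrange : ∀ i, κ i ∈ Set.range ι := fun i => by
    by_contra hi
    have h₀ := hκ ⊥ i
    have h₁ := hκ ⊤ i
    rw [comp_apply, hb _ _ hi] at h₀ h₁
    simpa using h₀.symm.trans h₁
  choose κ' hκ' using hrange
  refine ⟨κ', fun j => c (ι j), fun i i' h => ?_, fun x i => ?_, fun x j hj => ?_⟩
  · rw [← hιmono.lt_iff_lt, hκ', hκ']
    exact hκmono h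
  · rw [← hι (k x), hκ']
    exact hκ x i
  · rw [← hι (k x)]
    exact hc x (ι j) fun ⟨i, hi⟩ => hj ⟨i, hιmono.injective ((hκ' i).trans hi)⟩

lemma Cocubical.injective {φ : (Fin m → Bool) → (Fin n → Bool)} (hφ : Cocubical φ) :
    Function.Injective φ :=
  fun _ _ h => le_antisymm (hφ.le_iff.1 h.le) (hφ.le_iff.1 h.ge)

namespace Cotransverse

variable {f : (Fin q → Bool) → (Fin n → Bool)} (hf : Cotransverse f)

noncomputable def coordEmb : Fin q ↪o Fin n :=
  (varyingCoords f).orderEmbOfFin hf.card_varyingCoords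

noncomputable def cocubicalPart (y : Fin q → Bool) : Fin n → Bool :=
  extend hf.coordEmb y (f ⊥)

noncomputable def transversePart (x : Fin q → Bool) : Fin q → Bool :=
  f x ∘ hf.coordEmb

lemma cocubicalPart_apply_of_notMem {j : Fin n} (hj : j ∉ varyingCoords f) (y : Fin q → Bool) :
    hf.cocubicalPart y j = f ⊥ j :=
  extend_apply' _ _ _ fun ⟨i, hi⟩ => hj (hi ▸ orderEmbOfFin_mem _ _ i)

lemma cocubical_cocubicalPart : Cocubical hf.cocubicalPart :=
  ⟨hf.coordEmb, f ⊥, hf.coordEmb.strictMono,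
    fun _ _ => hf.coordEmb.injective.extend_apply _ _ _, fun _ _ hj => extend_apply' _ _ _ hj⟩

lemma cocubicalPart_comp_transversePart : hf.cocubicalPart ∘ hf.transversePart = f := by
  funext x j
  by_cases hj : j ∈ varyingCoords f
  · obtain ⟨i, rfl⟩ : j ∈ Set.range hf.coordEmb := by simpa [coordEmb] using hj
    exact hf.coordEmb.injective.extend_apply _ _ _
  · rw [comp_apply, hf.cocubicalPart_apply_of_notMem hj,
      (hf.apply_of_notMem_varyingCoords hj x).symm]

lemma cotransverse_transversePart : Cotransverse hf.transversePart :=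
  .of_cocubical_comp hf.cocubical_cocubicalPart (by rwa [hf.cocubicalPart_comp_transversePart])

lemma range_cocubicalPart_subset {h : (Fin p → Bool) → (Fin n → Bool)} (hh : Cocubical h)
    {g : (Fin q → Bool) → (Fin p → Bool)} (hhg : h ∘ g = f) :
    Set.range hf.cocubicalPart ⊆ Set.range h := by
  obtain ⟨ι, b, -, hι, hb⟩ := hh
  rintro _ ⟨y, rfl⟩
  refine ⟨fun i => hf.cocubicalPart y (ι i), funext fun j => ?_⟩
  by_cases hj : j ∈ Set.range ι
  · obtain ⟨i, rfl⟩ := hj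
    exact hι _ i
  · have hf_const : ∀ x, f x j = b j := fun x => hhg ▸ hb (g x) j hj
    have hj' : j ∉ varyingCoords f := by simp [varyingCoords, hf_const]
    rw [hb _ j hj, hf.cocubicalPart_apply_of_notMem hj', hf_const]

lemma exists_cocubical_comp_cocubicalPart {h : (Fin p → Bool) → (Fin n → Bool)}
    (hh : Cocubical h) {g : (Fin q → Bool) → (Fin p → Bool)} (hhg : h ∘ g = f) :
    ∃ k, Cocubical k ∧ h ∘ k = hf.cocubicalPart ∧ k ∘ hf.transversePart = g := by
  obtain ⟨k, hk⟩ :=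
    Set.range_subset_range_iff_exists_comp.1 (hf.range_cocubicalPart_subset hh hhg)
  refine ⟨k, hh.of_comp (hk ▸ hf.cocubical_cocubicalPart), hk.symm, ?_⟩
  refine hh.injective.comp_left (?_ : h ∘ (k ∘ hf.transversePart) = h ∘ g)
  rw [← comp_assoc, ← hk, hf.cocubicalPart_comp_transversePart, hhg]

end Cotransverse

end Combinatorics

namespace CategoryTheory

variable {C D : Type*} [Category C] [Category D]

noncomputable def Adjunction.leftAdjointObjIsoOfBijective {L : C ⥤ D} {R : D ⥤ C}
    (adj : L ⊣ R) {X : C} {Z : D} (u : X ⟶ R.obj Z)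
    (hu : ∀ Y, Bijective fun α : Z ⟶ Y => u ≫ R.map α) :
    L.obj X ≅ Z :=
  (adj.corepresentableBy X).uniqueUpToIso
    { homEquiv := Equiv.ofBijective _ (hu _)
      homEquiv_comp := by intros; simp }

variable (ι : C ⥤ D) {X : Cᵒᵖ ⥤ Type} {Z : Dᵒᵖ ⥤ Type} (u : X ⟶ ι.op ⋙ Z)

def IsWeaklyInitialFactorization {d : D} (z : Z.obj (op d)) {c : C} (x : X.obj (op c))
    (g : d ⟶ ι.obj c) : Prop :=
  Z.map g.op (u.app (op c) x) = z ∧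
    ∀ (c' : C) (x' : X.obj (op c')) (g' : d ⟶ ι.obj c'), Z.map g'.op (u.app (op c') x') = z →
      ∃ k : c ⟶ c', X.map k.op x' = x ∧ g ≫ ι.map k = g'

lemma map_op_app_map_op {Y : Dᵒᵖ ⥤ Type} (β : X ⟶ ι.op ⋙ Y) {d : D} {c c' : C}
    (g : d ⟶ ι.obj c) (k : c ⟶ c') (x : X.obj (op c')) :
    Y.map g.op (β.app (op c) (X.map k.op x)) = Y.map (g ≫ ι.map k).op (β.app (op c') x) := by
  rw [NatTrans.naturality_apply, op_comp, Functor.map_comp_apply]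
  rfl

lemma bijective_comp_whiskeringLeft_map
    (hu : ∀ (d : D) (z : Z.obj (op d)),
      ∃ (c : C) (x : X.obj (op c)) (g : d ⟶ ι.obj c), IsWeaklyInitialFactorization ι u z x g)
    (Y : Dᵒᵖ ⥤ Type) :
    Bijective fun α : Z ⟶ Y =>
      u ≫ ((Functor.whiskeringLeft Cᵒᵖ Dᵒᵖ Type).obj ι.op).map α := by
  choose c x g hfac hmin using hu
  refine ⟨fun α α' h => ?_, fun β => ?_⟩
  · ext ⟨d⟩ z
    change α.app _ z = α'.app _ z
    rw [← hfac d z, NatTrans.naturality_apply, NatTrans.naturality_apply]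
    exact congrArg _ (types_congr_hom (NatTrans.congr_app h (op (c d z))) (x d z))
  · refine ⟨{ app d := TypeCat.ofHom fun z => Y.map (g d.unop z).op (β.app _ (x d.unop z)),
               naturality d d' m := ?_ }, ?_⟩
    · ext z
      obtain ⟨k, hkx, hkg⟩ :=
        hmin d'.unop (Z.map m z) (c d.unop z) (x d.unop z) (m.unop ≫ g _ z)
          (by rw [op_comp, Functor.map_comp_apply, hfac]; rfl)
      change Y.map (g _ (Z.map m z)).op (β.app _ (x _ (Z.map m z))) =
        Y.map m (Y.map (g _ z).op (β.app _ (x _ z)))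
      rw [← hkx, map_op_app_map_op, hkg, op_comp, Functor.map_comp_apply]
      rfl
    · ext ⟨c₀⟩ x₀
      obtain ⟨k, hkx, hkg⟩ := hmin _ (u.app (op c₀) x₀) c₀ x₀ (𝟙 _) (by simp)
      change Y.map (g _ (u.app _ x₀)).op (β.app _ (x _ (u.app _ x₀))) = β.app _ x₀
      rw [← hkx, map_op_app_map_op, hkg, op_id, Functor.map_id_apply]

end CategoryTheory

lemma exists_isWeaklyInitialFactorization_yonedaMap (n : ℕ) (d : TransObj)
    (f : (yoneda.obj (⟨n⟩ : TransObj)).obj (op d)) :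
    ∃ (c : CubeObj) (x : (yoneda.obj (⟨n⟩ : CubeObj)).obj (op c))
      (g : d ⟶ cubeInclusion.obj c),
      IsWeaklyInitialFactorization cubeInclusion (yonedaMap cubeInclusion ⟨n⟩) f x g := by
  refine ⟨⟨d.dim⟩, ⟨_, f.2.cocubical_cocubicalPart⟩, ⟨_, f.2.cotransverse_transversePart⟩,
    Subtype.ext f.2.cocubicalPart_comp_transversePart, fun c' x' g' hfac => ?_⟩
  obtain ⟨k, hk, hxk, hkg⟩ :=
    f.2.exists_cocubical_comp_cocubicalPart x'.2 (congrArg Subtype.val hfac)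
  exact ⟨⟨k, hk⟩, Subtype.ext hxk, Subtype.ext hkg⟩

def boundaryCubeToBoundaryTrans (n : ℕ) :
    boundaryCube n ⟶ cubeInclusion.op ⋙ boundaryTrans n where
  app _ := TypeCat.ofHom fun f => ⟨f.1, f.2.1.cotransverse, f.2.2⟩

lemma exists_isWeaklyInitialFactorization_boundary (n : ℕ) (d : TransObj)
    (f : (boundaryTrans n).obj (op d)) :
    ∃ (c : CubeObj) (x : (boundaryCube n).obj (op c)) (g : d ⟶ cubeInclusion.obj c),
      IsWeaklyInitialFactorization cubeInclusion (boundaryCubeToBoundaryTrans n) f x g := by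
  refine ⟨⟨d.dim⟩, ⟨_, f.2.1.cocubical_cocubicalPart, f.2.2⟩,
    ⟨_, f.2.1.cotransverse_transversePart⟩, Subtype.ext f.2.1.cocubicalPart_comp_transversePart,
    fun c' x' g' hfac => ?_⟩
  obtain ⟨k, hk, hxk, hkg⟩ :=
    f.2.1.exists_cocubical_comp_cocubicalPart x'.2.1 (congrArg Subtype.val hfac)
  exact ⟨⟨k, hk⟩, Subtype.ext hxk, Subtype.ext hkg⟩

/-- Let `L̂` be the left adjoint to the restriction functor along the
inclusion `ι : □ → □̂` (i.e. the left Kan extension along `ιᵒᵖ`).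
Then `L̂(□[n]) ≅ □̂[n]` and `L̂(∂□[n]) ≅ ∂□̂[n]` for all `n ≥ 0`. -/
theorem stmt14 (L : (CubeObjᵒᵖ ⥤ Type) ⥤ (TransObjᵒᵖ ⥤ Type))
    (adj : L ⊣ (Functor.whiskeringLeft CubeObjᵒᵖ TransObjᵒᵖ Type).obj cubeInclusion.op) :
    ∀ n : ℕ,
      Nonempty (L.obj (yoneda.obj (⟨n⟩ : CubeObj)) ≅ yoneda.obj (⟨n⟩ : TransObj)) ∧
      Nonempty (L.obj (boundaryCube n) ≅ boundaryTrans n) := by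
  intro n
  refine ⟨⟨adj.leftAdjointObjIsoOfBijective (yonedaMap cubeInclusion ⟨n⟩) ?_⟩,
    ⟨adj.leftAdjointObjIsoOfBijective (boundaryCubeToBoundaryTrans n) ?_⟩⟩
  · exact bijective_comp_whiskeringLeft_map _ _ (exists_isWeaklyInitialFactorization_yonedaMap n)
  · exact bijective_comp_whiskeringLeft_map _ _ (exists_isWeaklyInitialFactorization_boundary n)
end
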